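/- arXiv:1907.05537 — 4 statements merged into one kernel-verified Lean document; each statement's English description precedes it below -/
import Mathlib

section
/- Let A be an additive category with cokernels and weak kernels, and let L ⊆ A be an additive full subcategory closed under direct summands such that the class of objects L is precovering in A. Let B be the abelian category with enough projective objects whose full subcategory of projective objects B_proj is equivalent to L. Then the equivalence of full subcategories B ⊇ B_proj ≅ L ⊆ A can be extended, in a unique way, to a pair of adjoint functors Φ_L : B → A and Ψ_L : A → B, where Φ_L is the left adjoint and Ψ_L is the right adjoint. -/
/-!
STATEMENT 3: Let `A` be an additive category with cokernels and weak kernels, and `L ⊆ A`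
a precovering additive full subcategory closed under direct summands. Let `B` be the abelian
category with enough projectives whose subcategory of projectives is equivalent to `L`.
Then the equivalence `B_proj ≌ L` extends, in a unique way, to a pair of adjoint functors
`Φ_L : B ⥤ A` (left adjoint) and `Ψ_L : A ⥤ B` (right adjoint).
-/

open CategoryTheory Limits

universe v₂ u₂ v u

namespace EnochsPaper

variable {A : Type u} [Category.{v} A]

/-- `l : X ⟶ C` is an `L`-precover of `C`. -/
def IsPrecover (L : A → Prop) {X C : A} (l : X ⟶ C) : Prop :=
  L X ∧ ∀ (X' : A), L X' → ∀ l' : X' ⟶ C, ∃ f : X' ⟶ X, f ≫ l = l'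

/-- The class `L` is precovering: every object has an `L`-precover. -/
def Precovering (L : A → Prop) : Prop :=
  ∀ C : A, ∃ (X : A) (l : X ⟶ C), IsPrecover L l

/-- `k : K ⟶ X` is a weak kernel of `f : X ⟶ Y`. -/
def IsWeakKernel [Preadditive A] {K X Y : A} (k : K ⟶ X) (f : X ⟶ Y) : Prop :=
  k ≫ f = 0 ∧ ∀ (C : A) (c : C ⟶ X), c ≫ f = 0 → ∃ h : C ⟶ K, h ≫ k = c

/-- The category `A` has weak kernels. -/
def HasWeakKernels (A : Type u) [Category.{v} A] [Preadditive A] : Prop :=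
  ∀ (X Y : A) (f : X ⟶ Y), ∃ (K : A) (k : K ⟶ X), IsWeakKernel k f

/-- A class of objects `L` in an additive category is an *additive full subcategory* if it
contains a zero object and is closed under binary biproducts. -/
def IsAdditiveSubcategory [Preadditive A] [HasZeroObject A] [HasBinaryBiproducts A]
    (L : A → Prop) : Prop :=
  (∃ Z : A, L Z ∧ IsZero Z) ∧ ∀ X Y : A, L X → L Y → L (X ⊞ Y)

/-- The class `L` is closed under direct summands. -/
def ClosedUnderSummands (L : A → Prop) : Prop :=
  ∀ (X N : A), L X → ∀ (s : N ⟶ X) (r : X ⟶ N), s ≫ r = 𝟙 N → L N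

variable {B : Type u₂} [Category.{v₂} B]

/-- The pair of functors `(Φ, Ψ)` extends the equivalence `e : B_proj ≌ L` of full
subcategories: the restriction of `Φ` to the projective objects of `B` agrees with
`e.functor` followed by the inclusion of `L` into `A`, and the restriction of `Ψ` to `L`
agrees with `e.inverse` followed by the inclusion of the projectives into `B`. -/
def ExtendsProjEquiv (L : A → Prop)
    (e : ObjectProperty.FullSubcategory (fun b : B => Projective b) ≌ ObjectProperty.FullSubcategory L)
    (Φ : B ⥤ A) (Ψ : A ⥤ B) : Prop :=
  Nonempty (ObjectProperty.ι (fun b : B => Projective b) ⋙ Φ ≅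
      e.functor ⋙ ObjectProperty.ι L) ∧
  Nonempty (ObjectProperty.ι L ⋙ Ψ ≅
      e.inverse ⋙ ObjectProperty.ι (fun b : B => Projective b))

/-!
For `C : A`, an `L`-precover of `C` followed by an `L`-precover of a weak kernel of it becomes,
through `e`, a morphism `d : Q₁ ⟶ Q₀` of projectives of `B`, and `Ψ C := coker d`.
Projectivity gives bijections `(F Q ⟶ C) ≃ (Q ⟶ Ψ C)` for projective `Q`, natural in `Q` and
`C`, where `F` is `e` followed by the inclusion of `L`. As every object of `B` is a cokernel of
a map of projectives, `Ψ` then has a left adjoint `Φ`, which restricts to `F` by Yoneda, and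
`Ψ ∘ F` is the inclusion because `F` is fully faithful. Uniqueness: a left adjoint preserves
cokernels, so it is determined by its restriction to projectives, and it determines its right
adjoint.
-/

section ProjectiveObjects

instance isClosedUnderColimitsOfShape_discrete_isProjective {C : Type*} [Category C]
    (J : Type*) : (isProjective C).IsClosedUnderColimitsOfShape (Discrete J) where
  colimitsOfShape_le := by
    rintro X ⟨p⟩
    have := p.prop_diag_obj
    refine ⟨fun f e _ => ⟨p.isColimit.desc (Cocone.mk _ (Discrete.natTrans fun j =>
      Projective.factorThru (p.ι.app j ≫ f) e)), p.isColimit.hom_ext fun j => ?_⟩⟩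
    simp [p.isColimit.fac_assoc]

theorem Equivalence.functor_additive_of_hasBinaryCoproducts {C D : Type*} [Category C]
    [Category D] [Preadditive C] [Preadditive D] [HasBinaryCoproducts C] (e : C ≌ D) :
    e.functor.Additive :=
  have := HasBinaryBiproducts.of_hasBinaryCoproducts (C := C)
  have := preservesBinaryBiproducts_of_preservesBinaryCoproducts e.functor
  Functor.additive_of_preservesBinaryBiproducts _

variable [Abelian B] [EnoughProjectives B]

theorem isIso_of_bijective_comp_projective {X Y : B} (g : X ⟶ Y)
    (hg : ∀ (Q : B) [Projective Q], Function.Bijective fun p : Q ⟶ X => p ≫ g) : IsIso g := by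
  have : Epi g := by
    obtain ⟨p, hp⟩ := (hg _).2 (Projective.π Y)
    exact epi_of_epi_fac hp
  have : Mono g := Preadditive.mono_of_cancel_zero g fun h hh => by
    have : Projective.π _ ≫ h = 0 := (hg _).1 (by simp [hh])
    exact (cancel_epi (Projective.π _)).1 (this.trans comp_zero.symm)
  exact isIso_of_mono_of_epi g

theorem Projective.d_π_comp_π (X : B) : Projective.d (Projective.π X) ≫ Projective.π X = 0 :=
  (Category.assoc _ _ _).trans (by rw [kernel.condition]; exact comp_zero)

noncomputable def Projective.isColimitCokernelCoforkπ (X : B) :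
    IsColimit (CokernelCofork.ofπ _ (Projective.d_π_comp_π X)) :=
  (exact_d_f (Projective.π X)).gIsCokernel

noncomputable abbrev projectiveOver (X : B) : (isProjective B).FullSubcategory :=
  ⟨Projective.over X, inferInstance⟩

noncomputable abbrev projectiveSyzygies (X : B) : (isProjective B).FullSubcategory :=
  ⟨Projective.syzygies (Projective.π X), inferInstance⟩

theorem isRightAdjoint_of_leftAdjointObjIsDefined_projective [Preadditive A] [HasCokernels A]
    (Ψ : A ⥤ B) (h : ∀ Q : B, Projective Q → Ψ.leftAdjointObjIsDefined Q) :
    Ψ.IsRightAdjoint := by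
  have := Preadditive.hasCoequalizers_of_hasCokernels (C := A)
  refine Functor.isRightAdjoint_of_leftAdjointObjIsDefined_eq_top (top_unique fun X _ => ?_)
  exact Functor.leftAdjointObjIsDefined_of_isColimit (Projective.isColimitCokernelCoforkπ X)
    (by rintro (_ | _)
        exacts [h _ (inferInstanceAs (Projective (Projective.syzygies _))),
          h _ (inferInstanceAs (Projective (Projective.over _)))])

end ProjectiveObjects

section ExtensionFromProjectives

variable [Preadditive A] [Abelian B] [EnoughProjectives B]

noncomputable def isColimitMapCokernelCoforkπ (Φ : B ⥤ A) [Φ.PreservesZeroMorphisms]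
    [PreservesColimitsOfShape WalkingParallelPair Φ] (X : B) :
    IsColimit ((CokernelCofork.ofπ _ (Projective.d_π_comp_π X)).map Φ) :=
  CokernelCofork.mapIsColimit _ (Projective.isColimitCokernelCoforkπ X) Φ

instance (Φ : B ⥤ A) [Φ.PreservesZeroMorphisms]
    [PreservesColimitsOfShape WalkingParallelPair Φ] (X : B) : Epi (Φ.map (Projective.π X)) :=
  epi_of_isColimit_cofork (isColimitMapCokernelCoforkπ Φ X)

variable {Φ Φ' Φ'' : B ⥤ A} [Φ.PreservesZeroMorphisms]
  [PreservesColimitsOfShape WalkingParallelPair Φ] [Φ'.PreservesZeroMorphisms]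
  (τ : (isProjective B).ι ⋙ Φ ⟶ (isProjective B).ι ⋙ Φ')

noncomputable def extendNatTransApp (X : B) : Φ.obj X ⟶ Φ'.obj X :=
  (isColimitMapCokernelCoforkπ Φ X).desc (CokernelCofork.ofπ
    (τ.app (projectiveOver X) ≫ Φ'.map (Projective.π X)) (by
      have := τ.naturality (ObjectProperty.homMk (Projective.d (Projective.π X)) :
        projectiveSyzygies X ⟶ projectiveOver X)
      dsimp at this
      rw [reassoc_of% this, ← Φ'.map_comp, Projective.d_π_comp_π, Φ'.map_zero, comp_zero]))

theorem map_π_comp_extendNatTransApp (X : B) :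
    Φ.map (Projective.π X) ≫ extendNatTransApp τ X =
      τ.app (projectiveOver X) ≫ Φ'.map (Projective.π X) :=
  (isColimitMapCokernelCoforkπ Φ X).fac _ WalkingParallelPair.one

theorem map_comp_extendNatTransApp {X : B} (Q : (isProjective B).FullSubcategory)
    (p : Q.obj ⟶ X) : Φ.map p ≫ extendNatTransApp τ X = τ.app Q ≫ Φ'.map p := by
  have := Q.property
  obtain ⟨s, rfl⟩ : ∃ s, s ≫ Projective.π X = p :=
    ⟨Projective.factorThru p _, Projective.factorThru_comp _ _⟩
  have hs := τ.naturality (ObjectProperty.homMk s : Q ⟶ projectiveOver X)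
  dsimp at hs
  rw [Φ.map_comp, Category.assoc, map_π_comp_extendNatTransApp, reassoc_of% hs, Φ'.map_comp]

noncomputable def extendNatTrans : Φ ⟶ Φ' where
  app := extendNatTransApp τ
  naturality X Y f := by
    rw [← cancel_epi (Φ.map (Projective.π X)), ← Φ.map_comp_assoc,
      map_comp_extendNatTransApp τ (projectiveOver X),
      reassoc_of% map_π_comp_extendNatTransApp τ X, Φ'.map_comp]

theorem extendNatTrans_comp [PreservesColimitsOfShape WalkingParallelPair Φ']
    [Φ''.PreservesZeroMorphisms] (σ : (isProjective B).ι ⋙ Φ' ⟶ (isProjective B).ι ⋙ Φ'') :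
    extendNatTrans τ ≫ extendNatTrans σ = extendNatTrans (τ ≫ σ) := by
  ext X
  rw [← cancel_epi (Φ.map (Projective.π X))]
  simp only [NatTrans.comp_app, extendNatTrans, reassoc_of% map_π_comp_extendNatTransApp,
    map_π_comp_extendNatTransApp, Category.assoc]

theorem extendNatTrans_id : extendNatTrans (𝟙 ((isProjective B).ι ⋙ Φ)) = 𝟙 Φ := by
  ext X
  rw [← cancel_epi (Φ.map (Projective.π X))]
  simp [extendNatTrans, map_π_comp_extendNatTransApp]

noncomputable def extendNatIso [PreservesColimitsOfShape WalkingParallelPair Φ']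
    (i : (isProjective B).ι ⋙ Φ ≅ (isProjective B).ι ⋙ Φ') : Φ ≅ Φ' where
  hom := extendNatTrans i.hom
  inv := extendNatTrans i.inv
  hom_inv_id := by rw [extendNatTrans_comp, i.hom_inv_id, extendNatTrans_id]
  inv_hom_id := by rw [extendNatTrans_comp, i.inv_hom_id, extendNatTrans_id]

end ExtensionFromProjectives

section RelativeAdjunctions

variable {P : Type*} [Category P]

structure RelativeAdjunction (ι : P ⥤ B) (F : P ⥤ A) (Ψ : A ⥤ B) where
  homEquiv (Q : P) (C : A) : (F.obj Q ⟶ C) ≃ (ι.obj Q ⟶ Ψ.obj C)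
  homEquiv_comp {Q : P} {C C' : A} (u : F.obj Q ⟶ C) (f : C ⟶ C') :
    homEquiv Q C' (u ≫ f) = homEquiv Q C u ≫ Ψ.map f
  homEquiv_map_comp {Q Q' : P} (g : Q ⟶ Q') {C : A} (u : F.obj Q' ⟶ C) :
    homEquiv Q C (F.map g ≫ u) = ι.map g ≫ homEquiv Q' C u

namespace RelativeAdjunction

variable {ι : P ⥤ B} {F : P ⥤ A} {Ψ : A ⥤ B} (α : RelativeAdjunction ι F Ψ)

def corepresentableBy (Q : P) :
    (Ψ ⋙ coyoneda.obj (Opposite.op (ι.obj Q))).CorepresentableBy (F.obj Q) where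
  homEquiv := α.homEquiv Q _
  homEquiv_comp f u := α.homEquiv_comp u f

def leftAdjointUniq {Φ : B ⥤ A} (adj : Φ ⊣ Ψ) : ι ⋙ Φ ≅ F :=
  NatIso.ofComponents (fun Q =>
    { hom := (adj.homEquiv _ _).symm (α.homEquiv Q _ (𝟙 (F.obj Q)))
      inv := (α.homEquiv Q _).symm (adj.unit.app (ι.obj Q))
      hom_inv_id := (adj.homEquiv _ _).injective (by
        rw [adj.homEquiv_naturality_right, Equiv.apply_symm_apply, ← α.homEquiv_comp,
          Category.id_comp, Equiv.apply_symm_apply]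
        exact (adj.homEquiv_id _).symm)
      inv_hom_id := (α.homEquiv Q _).injective (by
        rw [α.homEquiv_comp, Equiv.apply_symm_apply, ← Adjunction.homEquiv_unit,
          Equiv.apply_symm_apply]) })
    fun {Q Q'} g => (adj.homEquiv _ _).injective (by
      dsimp
      rw [adj.homEquiv_naturality_left, adj.homEquiv_naturality_right, Equiv.apply_symm_apply,
        Equiv.apply_symm_apply, ← α.homEquiv_comp, ← α.homEquiv_map_comp, Category.id_comp,
        Category.comp_id])

def unit : ι ⟶ F ⋙ Ψ where
  app Q := α.homEquiv Q _ (𝟙 _)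
  naturality {Q Q'} g := by
    dsimp
    rw [← α.homEquiv_map_comp, ← α.homEquiv_comp, Category.comp_id, Category.id_comp]

theorem map_comp_unit_app {Q Q' : P} (g : Q ⟶ Q') :
    ι.map g ≫ α.unit.app Q' = α.homEquiv Q _ (F.map g) := by
  rw [unit, ← α.homEquiv_map_comp, Category.comp_id]

end RelativeAdjunction

end RelativeAdjunctions

section RelativeToProjectives

variable [Abelian B] [EnoughProjectives B] {F : (isProjective B).FullSubcategory ⥤ A}
  {Ψ : A ⥤ B}

theorem RelativeAdjunction.isRightAdjoint [Preadditive A] [HasCokernels A]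
    (α : RelativeAdjunction (isProjective B).ι F Ψ) : Ψ.IsRightAdjoint :=
  isRightAdjoint_of_leftAdjointObjIsDefined_projective Ψ fun Q hQ =>
    (α.corepresentableBy ⟨Q, hQ⟩).isCorepresentable

theorem RelativeAdjunction.isIso_unit [F.Full] [F.Faithful]
    (α : RelativeAdjunction (isProjective B).ι F Ψ) : IsIso α.unit := by
  have (Q : (isProjective B).FullSubcategory) : IsIso (α.unit.app Q) :=
    isIso_of_bijective_comp_projective _ fun Q' hQ' => by
      have : (fun p : Q' ⟶ Q.obj => p ≫ α.unit.app Q) =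
          α.homEquiv ⟨Q', hQ'⟩ _ ∘ F.map ∘ ObjectProperty.homMk :=
        funext fun p => α.map_comp_unit_app (ObjectProperty.homMk (X := ⟨Q', hQ'⟩) (Y := Q) p)
      refine (congrArg Function.Bijective this).mpr ?_
      exact (α.homEquiv _ _).bijective.comp
        (((Functor.FullyFaithful.ofFullyFaithful F).map_bijective _ _).comp
          ⟨fun _ _ h => congrArg InducedCategory.Hom.hom h, ObjectProperty.homMk_surjective⟩)
  exact NatIso.isIso_of_isIso_app _

end RelativeToProjectives

section Presentations

variable {P : Type*} [Category P]

def IsPrecoveringFunctor (F : P ⥤ A) : Prop :=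
  ∀ C : A, ∃ (Q₀ : P) (π : F.obj Q₀ ⟶ C),
    ∀ (Q : P) (u : F.obj Q ⟶ C), ∃ t, F.map t ≫ π = u

theorem isPrecoveringFunctor_of_precovering {L : A → Prop} (hpre : Precovering L) (F : P ⥤ A)
    [F.Full] (hF : ∀ Q, L (F.obj Q)) (hL : ∀ X, L X → ∃ Q, Nonempty (F.obj Q ≅ X)) :
    IsPrecoveringFunctor F := fun C => by
  obtain ⟨X, l, hX, hl⟩ := hpre C
  obtain ⟨Q₀, ⟨φ⟩⟩ := hL X hX
  refine ⟨Q₀, φ.hom ≫ l, fun Q u => ?_⟩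
  obtain ⟨f, hf⟩ := hl _ (hF Q) u
  exact ⟨F.preimage (f ≫ φ.inv), by simp [hf]⟩

structure PrecoverPresentation [Preadditive A] (F : P ⥤ A) (C : A) where
  Q₀ : P
  Q₁ : P
  π : F.obj Q₀ ⟶ C
  d : Q₁ ⟶ Q₀
  map_d_comp_π : F.map d ≫ π = 0
  exists_lift (Q : P) (u : F.obj Q ⟶ C) : ∃ t : Q ⟶ Q₀, F.map t ≫ π = u
  exists_lift_d (Q : P) (t : Q ⟶ Q₀) : F.map t ≫ π = 0 → ∃ s : Q ⟶ Q₁, s ≫ d = t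

theorem PrecoverPresentation.nonempty [Preadditive A] {F : P ⥤ A} [F.Full] [F.Faithful]
    (hwk : HasWeakKernels A) (hF : IsPrecoveringFunctor F) (C : A) :
    Nonempty (PrecoverPresentation F C) := by
  obtain ⟨Q₀, π, hπ⟩ := hF C
  obtain ⟨K, w, hw₀, hw⟩ := hwk _ _ π
  obtain ⟨Q₁, q, hq⟩ := hF K
  refine ⟨⟨Q₀, Q₁, π, F.preimage (q ≫ w), by simp [hw₀], hπ, fun Q t ht => ?_⟩⟩
  obtain ⟨h, hh⟩ := hw _ (F.map t) ht
  obtain ⟨s, hs⟩ := hq _ h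
  exact ⟨s, F.map_injective (by simp [reassoc_of% hs, hh])⟩

end Presentations

section PresentedFunctor

variable [Preadditive A] [Abelian B] {F : (isProjective B).FullSubcategory ⥤ A} [F.Additive]

namespace PrecoverPresentation

variable {C : A} (p : PrecoverPresentation F C)

noncomputable abbrev cok : B := cokernel p.d.hom

noncomputable def toCok {Q : (isProjective B).FullSubcategory} (u : F.obj Q ⟶ C) :
    Q.obj ⟶ p.cok :=
  (p.exists_lift Q u).choose.hom ≫ cokernel.π _

theorem toCok_eq {Q : (isProjective B).FullSubcategory} {u : F.obj Q ⟶ C} (t : Q ⟶ p.Q₀)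
    (ht : F.map t ≫ p.π = u) : p.toCok u = t.hom ≫ cokernel.π _ := by
  set t' := (p.exists_lift Q u).choose
  obtain ⟨s, hs⟩ := p.exists_lift_d Q (t' - t) (by
    rw [F.map_sub, Preadditive.sub_comp, (p.exists_lift Q u).choose_spec, ht, sub_self])
  rw [toCok, ← sub_eq_zero, ← Preadditive.sub_comp]
  change (t' - t).hom ≫ _ = 0
  rw [← hs, ObjectProperty.FullSubcategory.comp_hom, Category.assoc, cokernel.condition,
    comp_zero]

theorem toCok_map_comp {Q Q' : (isProjective B).FullSubcategory} (g : Q ⟶ Q')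
    (u : F.obj Q' ⟶ C) : p.toCok (F.map g ≫ u) = g.hom ≫ p.toCok u := by
  obtain ⟨t, rfl⟩ := p.exists_lift Q' u
  rw [p.toCok_eq t rfl, p.toCok_eq (g ≫ t) (by simp), ObjectProperty.FullSubcategory.comp_hom,
    Category.assoc]

theorem toCok_zero {Q : (isProjective B).FullSubcategory} : p.toCok (0 : F.obj Q ⟶ C) = 0 := by
  rw [p.toCok_eq 0 (by simp)]
  exact zero_comp

theorem toCok_π : p.toCok p.π = cokernel.π _ := by
  rw [p.toCok_eq (𝟙 _) (by simp)]
  exact Category.id_comp _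

theorem toCok_bijective (Q : (isProjective B).FullSubcategory) :
    Function.Bijective (p.toCok (Q := Q)) := by
  have := Q.property
  constructor
  · intro u u' h
    obtain ⟨t, rfl⟩ := p.exists_lift Q u
    obtain ⟨t', rfl⟩ := p.exists_lift Q u'
    rw [p.toCok_eq t rfl, p.toCok_eq t' rfl, ← sub_eq_zero, ← Preadditive.sub_comp] at h
    have hy := (ShortComplex.cokernelSequence_exact p.d.hom).liftFromProjective_comp _ h
    rw [← sub_eq_zero, ← Preadditive.sub_comp, ← F.map_sub,
      show t - t' = ObjectProperty.homMk _ ≫ p.d from ObjectProperty.hom_ext _ hy.symm,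
      F.map_comp, Category.assoc, p.map_d_comp_π, comp_zero]
  · intro v
    exact ⟨F.map (ObjectProperty.homMk (Projective.factorThru v (cokernel.π _))) ≫ p.π,
      (p.toCok_eq _ rfl).trans (Projective.factorThru_comp _ _)⟩

variable {C' : A} (p' : PrecoverPresentation F C')

noncomputable def cokMap (f : C ⟶ C') : p.cok ⟶ p'.cok :=
  cokernel.desc _ (p'.toCok (p.π ≫ f)) (by
    rw [← p'.toCok_map_comp, ← Category.assoc, p.map_d_comp_π, zero_comp, p'.toCok_zero])

theorem π_cokMap (f : C ⟶ C') : cokernel.π _ ≫ p.cokMap p' f = p'.toCok (p.π ≫ f) :=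
  cokernel.π_desc _ _ _

theorem toCok_comp {Q : (isProjective B).FullSubcategory} (u : F.obj Q ⟶ C) (f : C ⟶ C') :
    p'.toCok (u ≫ f) = p.toCok u ≫ p.cokMap p' f := by
  obtain ⟨t, rfl⟩ := p.exists_lift Q u
  rw [Category.assoc, p'.toCok_map_comp, p.toCok_eq t rfl, Category.assoc, π_cokMap]

end PrecoverPresentation

variable (pres : ∀ C, PrecoverPresentation F C)

noncomputable def presentedFunctor : A ⥤ B where
  obj C := (pres C).cok
  map f := (pres _).cokMap (pres _) f
  map_id C := by
    rw [← cancel_epi (cokernel.π _), PrecoverPresentation.π_cokMap, Category.comp_id,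
      PrecoverPresentation.toCok_π, Category.comp_id]
  map_comp {_ Y Z} f g := by
    rw [← cancel_epi (cokernel.π _), PrecoverPresentation.π_cokMap, ← Category.assoc,
      (pres Y).toCok_comp (pres Z), ← PrecoverPresentation.π_cokMap, Category.assoc]

noncomputable def presentedFunctorRelativeAdjunction :
    RelativeAdjunction (isProjective B).ι F (presentedFunctor pres) where
  homEquiv Q C := Equiv.ofBijective _ ((pres C).toCok_bijective Q)
  homEquiv_comp u f := (pres _).toCok_comp (pres _) u f
  homEquiv_map_comp g _ u := (pres _).toCok_map_comp g u

end PresentedFunctor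

theorem exists_unique_adjoint_pair_extending_proj_equiv_general
    [Preadditive A] [HasCokernels A]
    (hwk : HasWeakKernels A) (L : A → Prop)
    (hpre : Precovering L)
    [Abelian B] [EnoughProjectives B]
    (e : ObjectProperty.FullSubcategory (fun b : B => Projective b) ≌ ObjectProperty.FullSubcategory L) :
    ∃ (Φ : B ⥤ A) (Ψ : A ⥤ B), Nonempty (Φ ⊣ Ψ) ∧ ExtendsProjEquiv L e Φ Ψ ∧
      ∀ (Φ' : B ⥤ A) (Ψ' : A ⥤ B), Nonempty (Φ' ⊣ Ψ') → ExtendsProjEquiv L e Φ' Ψ' →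
        Nonempty (Φ' ≅ Φ) ∧ Nonempty (Ψ' ≅ Ψ) := by
  let F := e.functor ⋙ ObjectProperty.ι L
  have : e.functor.Additive := Equivalence.functor_additive_of_hasBinaryCoproducts e
  have hF : IsPrecoveringFunctor F := isPrecoveringFunctor_of_precovering hpre F
    (fun Q => (e.functor.obj Q).property) fun X hX =>
      ⟨e.inverse.obj ⟨X, hX⟩, ⟨(ObjectProperty.ι L).mapIso (e.counitIso.app ⟨X, hX⟩)⟩⟩
  let pres C := (PrecoverPresentation.nonempty hwk hF C).some
  let α := presentedFunctorRelativeAdjunction pres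
  have := α.isRightAdjoint
  have := α.isIso_unit
  let adj := Adjunction.ofIsRightAdjoint (presentedFunctor pres)
  refine ⟨_, _, ⟨adj⟩,
    ⟨⟨α.leftAdjointUniq adj⟩, ⟨Iso.isoInverseComp (G := e) (asIso α.unit).symm⟩⟩, ?_⟩
  rintro Φ' Ψ' ⟨adj'⟩ ⟨⟨j⟩, -⟩
  have := adj'.isLeftAdjoint
  let i := extendNatIso (j ≪≫ (α.leftAdjointUniq adj).symm)
  exact ⟨⟨i⟩, ⟨Adjunction.rightAdjointUniq (adj'.ofNatIsoLeft i) adj⟩⟩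

/-- Under the stated hypotheses, the equivalence `B_proj ≌ L` extends,
uniquely up to natural isomorphism, to an adjoint pair `Φ : B ⥤ A ⊣ Ψ : A ⥤ B`. -/
theorem exists_unique_adjoint_pair_extending_proj_equiv
    [Preadditive A] [HasZeroObject A] [HasBinaryBiproducts A] [HasCokernels A]
    (hwk : HasWeakKernels A) (L : A → Prop) (hadd : IsAdditiveSubcategory L)
    (hsum : ClosedUnderSummands L) (hpre : Precovering L)
    [Abelian B] [EnoughProjectives B]
    (e : ObjectProperty.FullSubcategory (fun b : B => Projective b) ≌ ObjectProperty.FullSubcategory L) :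
    ∃ (Φ : B ⥤ A) (Ψ : A ⥤ B), Nonempty (Φ ⊣ Ψ) ∧ ExtendsProjEquiv L e Φ Ψ ∧
      ∀ (Φ' : B ⥤ A) (Ψ' : A ⥤ B), Nonempty (Φ' ⊣ Ψ') → ExtendsProjEquiv L e Φ' Ψ' →
        Nonempty (Φ' ≅ Φ) ∧ Nonempty (Ψ' ≅ Ψ) :=
  exists_unique_adjoint_pair_extending_proj_equiv_general hwk L hpre e

end EnochsPaper
end

section
/- Let A and B be two categories and let Φ : B → A, Ψ : A → B be a pair of adjoint functors with Ψ right adjoint to Φ, such that the restrictions of Φ and Ψ are mutually inverse equivalences between a full subcategory L ⊆ A and a full subcategory P ⊆ B. Then: (a) a morphism l : L → N in A with L ∈ L is an L-precover if and only if Ψ(l) : Ψ(L) → Ψ(N) is a P-precover; (b) such a morphism l is an L-cover if and only if Ψ(l) is a P-cover; (c) an object N ∈ A has an L-precover if and only if Ψ(N) has a P-precover in B; (d) an object N ∈ A has an L-cover if and only if Ψ(N) has a P-cover in B. -/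
/-!
For `X ∈ L` the counit `ε_X : Φ(Ψ X) ⟶ X` is invertible, and `Ψ.map f` is the adjoint transpose
of `ε_X ≫ f`; so `Ψ` is bijective on morphisms out of objects of `L`. A morphism `Y ⟶ Ψ N` with
`Y ∈ P` is `η_Y ≫ Ψ g` for its transpose `g : Φ Y ⟶ N`, where `Φ Y ∈ L`. Together these identify
factorizations through `l` with factorizations through `Ψ l`, and endomorphisms of `X` over `N`
with endomorphisms of `Ψ X` over `Ψ N`, which gives (a) and (b). Conversely a `P`-precover
`p : Y ⟶ Ψ N` equals `η_Y ≫ Ψ l` for its transpose `l`, so `Ψ l` is again a `P`-precover, and a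
`P`-cover when `η_Y` is invertible; (a) and (b) then apply to `l`, giving (c) and (d).
-/

open CategoryTheory Limits

universe v₂ u₂ v u

namespace EnochsPaper

variable {A : Type u} [Category.{v} A]

/-- `l : X ⟶ C` is an `L`-cover. -/
def IsCover (L : A → Prop) {X C : A} (l : X ⟶ C) : Prop :=
  IsPrecover L l ∧ ∀ e : X ⟶ X, e ≫ l = l → IsIso e

/-- The object `C` admits an `L`-precover. -/
def HasPrecover (L : A → Prop) (C : A) : Prop :=
  ∃ (X : A) (l : X ⟶ C), IsPrecover L l

/-- The object `C` admits an `L`-cover. -/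
def HasCover (L : A → Prop) (C : A) : Prop :=
  ∃ (X : A) (l : X ⟶ C), IsCover L l

variable {B : Type u₂} [Category.{v₂} B]

theorem IsPrecover.of_comp {L : A → Prop} {X' X C : A} {g : X' ⟶ X} {q : X ⟶ C}
    (h : IsPrecover L (g ≫ q)) (hX : L X) : IsPrecover L q := by
  refine ⟨hX, fun Z hZ l' => ?_⟩
  obtain ⟨f, hf⟩ := h.2 Z hZ l'
  exact ⟨f ≫ g, by rw [Category.assoc, hf]⟩

theorem IsCover.isIso_comp {L : A → Prop} {X' X C : A} {l : X ⟶ C} (hl : IsCover L l)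
    (i : X' ⟶ X) [IsIso i] (hX' : L X') : IsCover L (i ≫ l) := by
  refine ⟨IsPrecover.of_comp (g := inv i) (by simpa using hl.1) hX', fun e he => ?_⟩
  have : IsIso (inv i ≫ e ≫ i) := hl.2 _ (by simp [he])
  have he_conj : e = i ≫ (inv i ≫ e ≫ i) ≫ inv i := by simp
  rw [he_conj]
  infer_instance

variable {Φ : B ⥤ A} {Ψ : A ⥤ B} (adj : Φ ⊣ Ψ)

theorem _root_.CategoryTheory.Adjunction.map_eq_homEquiv_counit_comp {X N : A} (f : X ⟶ N) :
    Ψ.map f = adj.homEquiv _ _ (adj.counit.app X ≫ f) := by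
  simp [Adjunction.homEquiv_unit]

theorem _root_.CategoryTheory.Adjunction.unit_comp_map_homEquiv_symm {Y : B} {N : A}
    (p : Y ⟶ Ψ.obj N) : adj.unit.app Y ≫ Ψ.map ((adj.homEquiv _ _).symm p) = p :=
  (adj.homEquiv _ _).apply_symm_apply p

theorem _root_.CategoryTheory.Adjunction.map_bijective_of_isIso_counit (X N : A)
    [IsIso (adj.counit.app X)] : Function.Bijective (Ψ.map : (X ⟶ N) → (Ψ.obj X ⟶ Ψ.obj N)) := by
  have : (Ψ.map : (X ⟶ N) → _) =
      ((asIso (adj.counit.app X)).symm.homFromEquiv.trans (adj.homEquiv _ _)) :=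
    funext fun f => adj.map_eq_homEquiv_counit_comp f
  rw [this]
  exact Equiv.bijective _

theorem _root_.CategoryTheory.Adjunction.isIso_of_isIso_map_of_isIso_counit {X : A}
    [IsIso (adj.counit.app X)] (e : X ⟶ X) [IsIso (Ψ.map e)] : IsIso e := by
  have he : e = inv (adj.counit.app X) ≫ Φ.map (Ψ.map e) ≫ adj.counit.app X := by simp
  rw [he]
  infer_instance

variable {L : A → Prop} {P : B → Prop}

theorem isPrecover_map_homEquiv_symm {Y : B} {N : A} {p : Y ⟶ Ψ.obj N} (hp : IsPrecover P p)
    (hY : P (Ψ.obj (Φ.obj Y))) : IsPrecover P (Ψ.map ((adj.homEquiv _ _).symm p)) := by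
  refine IsPrecover.of_comp (g := adj.unit.app Y) ?_ hY
  rwa [adj.unit_comp_map_homEquiv_symm]

theorem isPrecover_iff_isPrecover_map (hΦ : ∀ X : B, P X → L (Φ.obj X))
    (hΨ : ∀ Y : A, L Y → P (Ψ.obj Y)) (hcounit : ∀ Y : A, L Y → IsIso (adj.counit.app Y))
    {X N : A} (hX : L X) (l : X ⟶ N) : IsPrecover L l ↔ IsPrecover P (Ψ.map l) := by
  constructor
  · rintro ⟨-, hl⟩
    refine ⟨hΨ X hX, fun Y hY p => ?_⟩
    obtain ⟨f, hf⟩ := hl _ (hΦ Y hY) ((adj.homEquiv _ _).symm p)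
    exact ⟨adj.homEquiv _ _ f, by rw [← adj.homEquiv_naturality_right, hf, Equiv.apply_symm_apply]⟩
  · rintro ⟨-, hl⟩
    refine ⟨hX, fun X' hX' l' => ?_⟩
    have := hcounit X' hX'
    obtain ⟨g, hg⟩ := hl _ (hΨ X' hX') (Ψ.map l')
    obtain ⟨f, rfl⟩ := (adj.map_bijective_of_isIso_counit X' X).2 g
    exact ⟨f, (adj.map_bijective_of_isIso_counit X' N).1 (by rw [Ψ.map_comp, hg])⟩

theorem isCover_iff_isCover_map (hΦ : ∀ X : B, P X → L (Φ.obj X))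
    (hΨ : ∀ Y : A, L Y → P (Ψ.obj Y)) (hcounit : ∀ Y : A, L Y → IsIso (adj.counit.app Y))
    {X N : A} (hX : L X) (l : X ⟶ N) : IsCover L l ↔ IsCover P (Ψ.map l) := by
  have := hcounit X hX
  rw [IsCover, IsCover, isPrecover_iff_isPrecover_map adj hΦ hΨ hcounit hX]
  refine and_congr_right fun _ => ⟨fun hl e he => ?_, fun hl e he => ?_⟩
  · obtain ⟨e, rfl⟩ := (adj.map_bijective_of_isIso_counit X X).2 e
    have := hl e ((adj.map_bijective_of_isIso_counit X N).1 (by rw [Ψ.map_comp, he]))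
    infer_instance
  · have := hl (Ψ.map e) (by rw [← Ψ.map_comp, he])
    exact adj.isIso_of_isIso_map_of_isIso_counit e

theorem hasPrecover_iff_hasPrecover_obj (hΦ : ∀ X : B, P X → L (Φ.obj X))
    (hΨ : ∀ Y : A, L Y → P (Ψ.obj Y)) (hcounit : ∀ Y : A, L Y → IsIso (adj.counit.app Y))
    (N : A) : HasPrecover L N ↔ HasPrecover P (Ψ.obj N) := by
  constructor
  · rintro ⟨X, l, hl⟩
    exact ⟨_, _, (isPrecover_iff_isPrecover_map adj hΦ hΨ hcounit hl.1 l).1 hl⟩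
  · rintro ⟨Y, p, hp⟩
    have hΦY := hΦ Y hp.1
    exact ⟨_, _, (isPrecover_iff_isPrecover_map adj hΦ hΨ hcounit hΦY _).2
      (isPrecover_map_homEquiv_symm adj hp (hΨ _ hΦY))⟩

theorem hasCover_iff_hasCover_obj (hΦ : ∀ X : B, P X → L (Φ.obj X))
    (hΨ : ∀ Y : A, L Y → P (Ψ.obj Y)) (hunit : ∀ X : B, P X → IsIso (adj.unit.app X))
    (hcounit : ∀ Y : A, L Y → IsIso (adj.counit.app Y))
    (N : A) : HasCover L N ↔ HasCover P (Ψ.obj N) := by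
  constructor
  · rintro ⟨X, l, hl⟩
    exact ⟨_, _, (isCover_iff_isCover_map adj hΦ hΨ hcounit hl.1.1 l).1 hl⟩
  · rintro ⟨Y, p, hp⟩
    have := hunit Y hp.1.1
    have hΦY := hΦ Y hp.1.1
    have hp' : Ψ.map ((adj.homEquiv _ _).symm p) = inv (adj.unit.app Y) ≫ p := by
      rw [IsIso.eq_inv_comp, adj.unit_comp_map_homEquiv_symm]
    refine ⟨_, (adj.homEquiv _ _).symm p, (isCover_iff_isCover_map adj hΦ hΨ hcounit hΦY _).2 ?_⟩
    rw [hp']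
    exact hp.isIso_comp _ (hΨ _ hΦY)

/-- Let `Φ ⊣ Ψ` be an adjunction such that `Φ` and `Ψ` restrict to
mutually inverse equivalences between `L ⊆ A` and `P ⊆ B`; this is expressed by `Φ`
mapping `P` into `L`, `Ψ` mapping `L` into `P`, the unit being an isomorphism on `P`
and the counit being an isomorphism on `L`. Then:
(a) for `l : X ⟶ N` with `X ∈ L`, `l` is an `L`-precover iff `Ψ(l)` is a `P`-precover;
(b) such `l` is an `L`-cover iff `Ψ(l)` is a `P`-cover;
(c) `N` has an `L`-precover iff `Ψ(N)` has a `P`-precover;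
(d) `N` has an `L`-cover iff `Ψ(N)` has a `P`-cover. -/
theorem precover_cover_transfer_along_adjunction
    (L : A → Prop) (P : B → Prop) (Φ : B ⥤ A) (Ψ : A ⥤ B) (adj : Φ ⊣ Ψ)
    (hΦ : ∀ X : B, P X → L (Φ.obj X)) (hΨ : ∀ Y : A, L Y → P (Ψ.obj Y))
    (hunit : ∀ X : B, P X → IsIso (adj.unit.app X))
    (hcounit : ∀ Y : A, L Y → IsIso (adj.counit.app Y)) :
    (∀ (X N : A) (_ : L X) (l : X ⟶ N), IsPrecover L l ↔ IsPrecover P (Ψ.map l)) ∧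
    (∀ (X N : A) (_ : L X) (l : X ⟶ N), IsCover L l ↔ IsCover P (Ψ.map l)) ∧
    (∀ N : A, HasPrecover L N ↔ HasPrecover P (Ψ.obj N)) ∧
    (∀ N : A, HasCover L N ↔ HasCover P (Ψ.obj N)) :=
  ⟨fun _ _ hX => isPrecover_iff_isPrecover_map adj hΦ hΨ hcounit hX,
    fun _ _ hX => isCover_iff_isCover_map adj hΦ hΨ hcounit hX,
    hasPrecover_iff_hasPrecover_obj adj hΦ hΨ hcounit,
    hasCover_iff_hasCover_obj adj hΦ hΨ hunit hcounit⟩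

end EnochsPaper
end

section
/- Let A be a cocomplete additive category and M ∈ A an object satisfying the telescope Hom exactness condition (THEC). Let B = T_M-Mod be the Eilenberg–Moore category of the monad T_M with projective generator P = T_M(*), let G ⊆ A be the full subcategory of objects G for which the adjunction counit Φ_M(Ψ_M(G)) → G is an isomorphism, and let H ⊆ B be the full subcategory of objects H for which the adjunction unit H → Ψ_M(Φ_M(H)) is an isomorphism. Then every countable direct limit of copies of M in A belongs to G, every countable direct limit of copies of P in B belongs to H, and the functor Ψ_M preserves countable direct limits of copies of M (taking them to countable direct limits of copies of P). -/
open CategoryTheory Limits Opposite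

universe v u

namespace EnochsPaper

attribute [local instance] Limits.hasSmallestColimitsOfHasColimits

variable {A : Type u} [Category.{v} A]

/-- The class `L` is covering: every object has an `L`-cover. -/
def Covering (L : A → Prop) : Prop := ∀ C : A, HasCover L C

/-- The class `L` is closed under direct limits (colimits of diagrams indexed by
nonempty directed posets). -/
def ClosedUnderDirectLimits (L : A → Prop) : Prop :=
  ∀ (Θ : Type v) (_ : PartialOrder Θ), IsDirected Θ (· ≤ ·) → Nonempty Θ →
    ∀ (D : Θ ⥤ A) (c : Cocone D), IsColimit c → (∀ θ : Θ, L (D.obj θ)) → L c.pt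

/-- The class `L` is closed under countable direct limits. -/
def ClosedUnderCountableDirectLimits (L : A → Prop) : Prop :=
  ∀ (Θ : Type v) (_ : PartialOrder Θ), Countable Θ → IsDirected Θ (· ≤ ·) → Nonempty Θ →
    ∀ (D : Θ ⥤ A) (c : Cocone D), IsColimit c → (∀ θ : Θ, L (D.obj θ)) → L c.pt

variable [HasColimits A]

/-- The copower functor `X ↦ M^{(X)}`, sending a set to the coproduct of that many
copies of `M`. -/
@[simps]
noncomputable def copower (M : A) : Type v ⥤ A where
  obj X := ∐ (fun _ : X => M)
  map {X Y} f := Sigma.desc (fun x => Sigma.ι (fun _ : Y => M) (f x))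

/-- The adjunction `M^{(-)} ⊣ Hom_A(M, -)`. -/
noncomputable def copowerAdj (M : A) : copower M ⊣ coyoneda.obj (op M) :=
  Adjunction.mkOfHomEquiv
    { homEquiv := fun X N =>
        { toFun := fun g => TypeCat.ofHom (fun x => Sigma.ι (fun _ : X => M) x ≫ g)
          invFun := fun h => Sigma.desc h
          left_inv := fun g => by dsimp only [copower]; ext x; simp
          right_inv := fun h => by ext x; simp }
      homEquiv_naturality_left_symm := by
        intro X X' N f g
        dsimp only [copower]
        ext x
        rw [← Category.assoc, Sigma.ι_desc]
        exact (Sigma.ι_desc _ _).trans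
          (Sigma.ι_desc (⇑(ConcreteCategory.hom g)) (ConcreteCategory.hom f x)).symm
      homEquiv_naturality_right := by
        intro X N N' g f
        ext x
        exact (Category.assoc _ _ _).symm }

/-- The monad `T_M : X ↦ Hom_A(M, M^{(X)})` on the category of sets, induced by the
adjunction `M^{(-)} ⊣ Hom_A(M, -)`. -/
noncomputable def TM (M : A) : Monad (Type v) := (copowerAdj M).toMonad

/-- The category `B = T_M-Mod` of modules (Eilenberg–Moore algebras) over the monad
`T_M`. -/
noncomputable abbrev BCat (M : A) := (TM M).Algebra

/-- The free `T_M`-module on one generator, `P = T_M(*)`; it is a projective generator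
of `B = T_M-Mod`. -/
noncomputable def PGen (M : A) : BCat M := (TM M).free.obj PUnit

/-- The functor `Ψ_M : A ⥤ B`, `N ↦ Hom_A(M, N)` with its natural `T_M`-module structure:
the comparison functor of the adjunction. -/
noncomputable def PsiM (M : A) : A ⥤ BCat M := Monad.comparison (copowerAdj M)

/-- The functor `Φ_M : B ⥤ A`, left adjoint to `Ψ_M`. -/
noncomputable def PhiM (M : A) : BCat M ⥤ A :=
  Monad.MonadicityInternal.leftAdjointComparison (copowerAdj M)

/-- The adjunction `Φ_M ⊣ Ψ_M`. -/
noncomputable def adjM (M : A) : PhiM M ⊣ PsiM M :=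
  Monad.MonadicityInternal.comparisonAdjunction (copowerAdj M)

/-- `Add(M)`: the class of direct summands of coproducts of copies of `M`. -/
def AddClass (M : A) : A → Prop := fun N =>
  ∃ (X : Type v) (s : N ⟶ ∐ (fun _ : X => M)) (r : (∐ fun _ : X => M) ⟶ N), s ≫ r = 𝟙 N

/-- The inductive system `M → M → M → ⋯` determined by a sequence of endomorphisms of
`M`; its direct limit is a "countable direct limit of copies of `M`". -/
noncomputable def seqDiagram {C : Type u_1} [Category.{u_2} C] (M : C) (f : ℕ → (M ⟶ M)) :
    ℕ ⥤ C :=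
  Functor.ofSequence (X := fun _ => M) f

variable [Preadditive A]

/-- The telescope map `id − shift : ∐_{n} M ⟶ ∐_{n} M` associated with a sequence of
endomorphisms `f n : M ⟶ M`; its component on the `n`-th summand is
`ι_n − f_n ≫ ι_{n+1}`. -/
noncomputable def telescopeMap (M : A) (f : ℕ → (M ⟶ M)) :
    (∐ fun _ : ℕ => M) ⟶ (∐ fun _ : ℕ => M) :=
  Sigma.desc fun n =>
    Sigma.ι (fun _ : ℕ => M) n - (f n ≫ Sigma.ι (fun _ : ℕ => M) (n + 1))

/-- The canonical morphism `∐_{n} M ⟶ colim_n M` to (the point of a cocone computing)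
the direct limit of the inductive system. -/
noncomputable def telescopeProj (M : A) (f : ℕ → (M ⟶ M)) (c : Cocone (seqDiagram M f)) :
    (∐ fun _ : ℕ => M) ⟶ c.pt :=
  Sigma.desc fun n => c.ι.app n

/-- The telescope Hom exactness condition (THEC): for every sequence of endomorphisms of
`M`, the right exact telescope sequence `∐ M → ∐ M → colim M → 0` stays right exact after
applying `Hom_A(M, −)`: every morphism `M ⟶ colim M` lifts to `∐ M`, and every morphism
`M ⟶ ∐ M` killed by the projection factors through the telescope map `id − shift`. -/
def THEC (M : A) : Prop :=
  ∀ (f : ℕ → (M ⟶ M)) (c : Cocone (seqDiagram M f)), IsColimit c →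
    (∀ h : M ⟶ c.pt, ∃ g : M ⟶ ∐ fun _ : ℕ => M, g ≫ telescopeProj M f c = h) ∧
    (∀ g : M ⟶ ∐ fun _ : ℕ => M, g ≫ telescopeProj M f c = 0 →
      ∃ e : M ⟶ ∐ fun _ : ℕ => M, e ≫ telescopeMap M f = g)



namespace Stmt5

variable {A : Type u} [Category.{v} A] [HasColimits A] [Preadditive A]

set_option linter.unusedSectionVars false
set_option linter.unnecessarySimpa false


lemma copowerAdj_counit_app (M N : A) :
    (copowerAdj M).counit.app N = Sigma.desc (fun h : M ⟶ N => h) := by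
  simp only [copowerAdj, Adjunction.mkOfHomEquiv_counit_app]
  rfl

lemma TM_map_apply (M : A) {X Y : Type v} (φ : X ⟶ Y) (g : (TM M).obj X) :
    (TM M).map φ g = g ≫ (copower M).map φ := rfl

lemma psi_a_apply (M N : A) (t : (TM M).obj (M ⟶ N)) :
    ((PsiM M).obj N).a t = t ≫ (copowerAdj M).counit.app N := rfl

lemma mu_apply (M : A) (X : Type v) (t : (TM M).obj ((TM M).obj X)) :
    (TM M).μ.app X t = t ≫ (copowerAdj M).counit.app ((copower M).obj X) := rfl

lemma psi_map_apply (M : A) {N N' : A} (q : N ⟶ N') (g : M ⟶ N) :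
    ((PsiM M).map q).f g = g ≫ q := rfl

lemma algebra_unit_apply (M : A) (Z : (TM M).Algebra) (z : Z.A) :
    Z.a (Sigma.ι (fun _ : Z.A => M) z) = z := by
  have h := types_congr_hom Z.unit z
  simp only [types_comp_apply, types_id_apply] at h
  rw [show (TM M).η.app Z.A z = Sigma.ι (fun _ : Z.A => M) z ≫ 𝟙 _ from rfl,
    Category.comp_id] at h
  exact h

lemma algebra_assoc_apply (M : A) (Z : (TM M).Algebra) (u : (TM M).obj ((TM M).obj Z.A)) :
    Z.a (u ≫ (copower M).map Z.a) =
    Z.a (u ≫ (copowerAdj M).counit.app ((copower M).obj Z.A)) := by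
  have h := types_congr_hom Z.assoc u
  simp only [types_comp_apply] at h
  exact h.symm

lemma hom_h_apply (M : A) {Z W : (TM M).Algebra} (p : Z ⟶ W) (t : (TM M).obj Z.A) :
    W.a ((TM M).map p.f t) = p.f (Z.a t) := types_congr_hom p.h t


universe w

lemma map_desc_apply (M : A) (Z : (TM M).Algebra)
    (u : M ⟶ ∐ fun _ : (M ⟶ (∐ fun _ : Z.A => M)) => M) :
    Z.a (u ≫ Sigma.desc (fun t : M ⟶ (∐ fun _ : Z.A => M) =>
        Sigma.ι (fun _ : Z.A => M) (Z.a t)))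
      = Z.a (u ≫ Sigma.desc (fun t : M ⟶ (∐ fun _ : Z.A => M) => t)) := by
  have h := algebra_assoc_apply M Z u
  rw [copowerAdj_counit_app] at h
  exact h

lemma algebra_eval_eq (M : A) (Z : (TM M).Algebra) {Y : Type w}
    [HasCoproduct (fun _ : Y => M)]
    (θ : (∐ fun _ : Y => M) ⟶ (∐ fun _ : Z.A => M)) (G : M ⟶ ∐ fun _ : Y => M) :
    Z.a (G ≫ θ) =
    Z.a (G ≫ Sigma.desc (fun y => Sigma.ι (fun _ : Z.A => M)
      (Z.a (Sigma.ι (fun _ : Y => M) y ≫ θ)))) := by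
  set K : (∐ fun _ : Y => M) ⟶ (∐ fun _ : (M ⟶ (∐ fun _ : Z.A => M)) => M) :=
    Sigma.desc (fun y => Sigma.ι (fun _ : (M ⟶ (∐ fun _ : Z.A => M)) => M)
      (Sigma.ι (fun _ : Y => M) y ≫ θ)) with hK
  have h1 : K ≫ Sigma.desc (fun t : M ⟶ (∐ fun _ : Z.A => M) =>
      Sigma.ι (fun _ : Z.A => M) (Z.a t)) =
      Sigma.desc (fun y => Sigma.ι (fun _ : Z.A => M)
        (Z.a (Sigma.ι (fun _ : Y => M) y ≫ θ))) := by
    ext y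
    simp [hK]
    rfl
  have h2 : K ≫ Sigma.desc (fun t : M ⟶ (∐ fun _ : Z.A => M) => t) = θ := by
    ext y
    simp [hK]
  have e2 := congrArg (fun m => Z.a (G ≫ m)) h2
  have e1 := congrArg (fun m => Z.a (G ≫ m)) h1
  erw [← Category.assoc] at e2
  erw [← Category.assoc] at e1
  exact e2.symm.trans ((map_desc_apply M Z (G ≫ K)).symm.trans e1)

lemma psi_hom_eval (M : A) {Z : (TM M).Algebra} (σ : (PsiM M).obj M ⟶ Z) (h : M ⟶ M) :
    σ.f h = Z.a (h ≫ Sigma.ι (fun _ : Z.A => M) (σ.f (𝟙 M))) := by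
  have h1 := hom_h_apply M σ (h ≫ Sigma.ι (fun _ : (M ⟶ M) => M) (𝟙 M))
  rw [show ((PsiM M).obj M).a (h ≫ Sigma.ι (fun _ : (M ⟶ M) => M) (𝟙 M)) = h by
      erw [psi_a_apply, copowerAdj_counit_app, Category.assoc, Sigma.ι_desc, Category.comp_id]] at h1
  rw [← h1]
  rw [show (TM M).map σ.f (h ≫ Sigma.ι (fun _ : (M ⟶ M) => M) (𝟙 M)) =
      (h ≫ Sigma.ι (fun _ : (M ⟶ M) => M) (𝟙 M)) ≫
        Sigma.desc (fun x : (M ⟶ M) => Sigma.ι (fun _ : Z.A => M) (σ.f x)) from rfl]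
  rw [Category.assoc]
  have e : Sigma.ι (fun _ : (M ⟶ M) => M) (𝟙 M) ≫
      Sigma.desc (fun x : (M ⟶ M) => Sigma.ι (fun _ : Z.A => M) (σ.f x)) =
      Sigma.ι (fun _ : Z.A => M) (σ.f (𝟙 M)) :=
    Sigma.ι_desc (fun x : (M ⟶ M) => Sigma.ι (fun _ : Z.A => M) (σ.f x)) (𝟙 M)
  rw [e]
  rfl

lemma psi_hom_eval' (M W : A) (p : (PsiM M).obj M ⟶ (PsiM M).obj W) (h : M ⟶ M) :
    p.f h = h ≫ p.f (𝟙 M) := by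
  erw [psi_hom_eval M p h, psi_a_apply, copowerAdj_counit_app, Category.assoc]
  exact congrArg (fun t => h ≫ t)
    (Sigma.ι_desc (f := fun _ : ((PsiM M).obj W).A => M)
      (fun t : M ⟶ W => (t : M ⟶ W)) (p.f (𝟙 M)))

lemma psiM_map_bijective (M W : A) :
    Function.Bijective (fun q : M ⟶ W => (PsiM M).map q) := by
  constructor
  · intro q q' hqq'
    have h := types_congr_hom (congrArg Monad.Algebra.Hom.f hqq') (𝟙 M)
    rw [psi_map_apply, psi_map_apply, Category.id_comp, Category.id_comp] at h
    exact h
  · intro p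
    refine ⟨p.f (𝟙 M), ?_⟩
    ext1
    refine ConcreteCategory.hom_ext _ _ (fun h => ?_)
    exact (psi_hom_eval' M W p h).symm

lemma isIso_adjM_counit_M (M : A) : IsIso ((adjM M).counit.app M) := by
  apply isIso_of_coyoneda_map_bijective
  intro W
  have key : ∀ q : M ⟶ W, (adjM M).counit.app M ≫ q =
      ((adjM M).homEquiv ((PsiM M).obj M) W).symm ((PsiM M).map q) := by
    intro q
    apply ((adjM M).homEquiv _ _).injective
    rw [Equiv.apply_symm_apply, Adjunction.homEquiv_unit]
    simp
  simp only [key]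
  exact (Equiv.bijective _).comp (psiM_map_bijective M W)

lemma ι_telescopeProj (M : A) (f : ℕ → (M ⟶ M)) (c : Cocone (seqDiagram M f)) (n : ℕ) :
    Sigma.ι (fun _ : ℕ => M) n ≫ telescopeProj M f c = c.ι.app n := by
  simp [telescopeProj]
  rfl

lemma seq_w (M : A) (f : ℕ → (M ⟶ M)) (c : Cocone (seqDiagram M f)) (n : ℕ) :
    f n ≫ c.ι.app (n + 1) = c.ι.app n := by
  have h := c.w (homOfLE (Nat.le_add_right n 1))
  rwa [show (seqDiagram M f).map (homOfLE (Nat.le_add_right n 1)) = f n from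
    Functor.ofSequence_map_homOfLE_succ f n] at h


section TauConstruction

variable (M : A) (f : ℕ → (M ⟶ M))

/-- The cocone legs of a cocone over `seqDiagram M f ⋙ PsiM M`, retyped using the
definitional equality `(seqDiagram M f ⋙ PsiM M).obj n = (PsiM M).obj M`. -/
noncomputable def sIota (s : Cocone (seqDiagram M f ⋙ PsiM M)) (n : ℕ) :
    (PsiM M).obj M ⟶ s.pt := s.ι.app n

lemma sIota_w (s : Cocone (seqDiagram M f ⋙ PsiM M)) (n : ℕ) :
    (PsiM M).map (f n) ≫ sIota M f s (n + 1) = sIota M f s n := by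
  have hw := s.w (homOfLE (Nat.le_add_right n 1))
  simp only [seqDiagram, Functor.comp_map, Functor.ofSequence_map_homOfLE_succ] at hw
  exact hw

noncomputable def xElt (s : Cocone (seqDiagram M f ⋙ PsiM M)) (n : ℕ) : s.pt.A :=
  (sIota M f s n).f (𝟙 M)

lemma xElt_def (s : Cocone (seqDiagram M f ⋙ PsiM M)) (n : ℕ) :
    xElt M f s n = (sIota M f s n).f (𝟙 M) := rfl

noncomputable def Jx (s : Cocone (seqDiagram M f ⋙ PsiM M)) :
    (∐ fun _ : ℕ => M) ⟶ (∐ fun _ : s.pt.A => M) :=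
  Sigma.desc (fun n => Sigma.ι (fun _ : s.pt.A => M) (xElt M f s n))

noncomputable def tauFun (s : Cocone (seqDiagram M f ⋙ PsiM M)) :
    (M ⟶ ∐ fun _ : ℕ => M) → s.pt.A :=
  fun g => s.pt.a (g ≫ Jx M f s)

lemma xElt_eq (s : Cocone (seqDiagram M f ⋙ PsiM M)) (n : ℕ) :
    xElt M f s n = (sIota M f s (n + 1)).f (f n) := by
  have h := types_congr_hom (congrArg Monad.Algebra.Hom.f (sIota_w M f s n)) (𝟙 M)
  rw [Monad.Algebra.comp_f] at h
  rw [show (((PsiM M).map (f n)).f ≫ (sIota M f s (n+1)).f) (𝟙 M) =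
      (sIota M f s (n+1)).f (((PsiM M).map (f n)).f (𝟙 M)) from rfl] at h
  rw [psi_map_apply, Category.id_comp] at h
  rw [xElt_def, ← h]

lemma tau_relation (s : Cocone (seqDiagram M f ⋙ PsiM M)) (n : ℕ) :
    tauFun M f s (Sigma.ι (fun _ : ℕ => M) n - f n ≫ Sigma.ι (fun _ : ℕ => M) (n + 1)) =
    tauFun M f s 0 := by
  set σ : (PsiM M).obj M ⟶ s.pt := sIota M f s (n + 1) with hσ
  have h1 := hom_h_apply M σ (Sigma.ι (fun _ : (M ⟶ M) => M) (f n)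
    - f n ≫ Sigma.ι (fun _ : (M ⟶ M) => M) (𝟙 M))
  have h2 := hom_h_apply M σ (0 : M ⟶ ∐ fun _ : (M ⟶ M) => M)
  rw [show ((PsiM M).obj M).a
        (Sigma.ι (fun _ : (M ⟶ M) => M) (f n)
          - f n ≫ Sigma.ι (fun _ : (M ⟶ M) => M) (𝟙 M)) = (0 : M ⟶ M) by
      erw [psi_a_apply, copowerAdj_counit_app, Preadditive.sub_comp, Category.assoc]
      erw [Sigma.ι_desc, Sigma.ι_desc, Category.comp_id, sub_self]] at h1
  rw [show ((PsiM M).obj M).a (0 : M ⟶ ∐ fun _ : (M ⟶ M) => M) = (0 : M ⟶ M) by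
      erw [psi_a_apply, copowerAdj_counit_app, Limits.zero_comp]] at h2
  have hT1 : (TM M).map σ.f (Sigma.ι (fun _ : (M ⟶ M) => M) (f n)
      - f n ≫ Sigma.ι (fun _ : (M ⟶ M) => M) (𝟙 M)) =
      Sigma.ι (fun _ : s.pt.A => M) (σ.f (f n))
        - f n ≫ Sigma.ι (fun _ : s.pt.A => M) (σ.f (𝟙 M)) := by
    rw [show (TM M).map σ.f (Sigma.ι (fun _ : (M ⟶ M) => M) (f n)
        - f n ≫ Sigma.ι (fun _ : (M ⟶ M) => M) (𝟙 M)) =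
        (Sigma.ι (fun _ : (M ⟶ M) => M) (f n)
          - f n ≫ Sigma.ι (fun _ : (M ⟶ M) => M) (𝟙 M)) ≫
          Sigma.desc (fun t : (M ⟶ M) => Sigma.ι (fun _ : s.pt.A => M) (σ.f t)) from rfl]
    rw [Preadditive.sub_comp, Category.assoc]
    simp
    rfl
  have hT2 : (TM M).map σ.f (0 : M ⟶ ∐ fun _ : (M ⟶ M) => M) =
      (0 : M ⟶ ∐ fun _ : s.pt.A => M) := by
    rw [show (TM M).map σ.f (0 : M ⟶ ∐ fun _ : (M ⟶ M) => M) =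
        (0 : M ⟶ ∐ fun _ : (M ⟶ M) => M) ≫
          Sigma.desc (fun t : (M ⟶ M) => Sigma.ι (fun _ : s.pt.A => M) (σ.f t)) from rfl]
    simp
    rfl
  rw [hT1] at h1
  rw [hT2] at h2
  have hL : tauFun M f s (Sigma.ι (fun _ : ℕ => M) n - f n ≫ Sigma.ι (fun _ : ℕ => M) (n + 1))
      = s.pt.a (Sigma.ι (fun _ : s.pt.A => M) (σ.f (f n))
          - f n ≫ Sigma.ι (fun _ : s.pt.A => M) (σ.f (𝟙 M))) := by
    erw [tauFun, Preadditive.sub_comp, Category.assoc]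
    erw [show Sigma.ι (fun _ : ℕ => M) n ≫ Jx M f s =
        Sigma.ι (fun _ : s.pt.A => M) (xElt M f s n) from Sigma.ι_desc _ _]
    erw [show Sigma.ι (fun _ : ℕ => M) (n+1) ≫ Jx M f s =
        Sigma.ι (fun _ : s.pt.A => M) (xElt M f s (n+1)) from Sigma.ι_desc _ _]
    rw [xElt_eq M f s n, xElt_def, ← hσ]
    rfl
  have hR : tauFun M f s 0 = s.pt.a (0 : M ⟶ ∐ fun _ : s.pt.A => M) := by
    rw [tauFun]
    erw [Limits.zero_comp]
    rfl
  rw [hL, hR, h1, ← h2]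

end TauConstruction


section TauInvariance

variable (M : A) (f : ℕ → (M ⟶ M))

lemma tau_invariant (s : Cocone (seqDiagram M f ⋙ PsiM M))
    (g e : M ⟶ ∐ fun _ : ℕ => M) :
    tauFun M f s (g + e ≫ telescopeMap M f) = tauFun M f s g := by
  set ixl : (∐ fun _ : ℕ => M) ⟶ (∐ fun _ : ℕ ⊕ ℕ => M) :=
    Sigma.desc (fun n => Sigma.ι (fun _ : ℕ ⊕ ℕ => M) (Sum.inl n)) with hixl
  set ixr : (∐ fun _ : ℕ => M) ⟶ (∐ fun _ : ℕ ⊕ ℕ => M) :=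
    Sigma.desc (fun n => Sigma.ι (fun _ : ℕ ⊕ ℕ => M) (Sum.inr n)) with hixr
  set α : (∐ fun _ : ℕ ⊕ ℕ => M) ⟶ (∐ fun _ : ℕ => M) :=
    Sigma.desc (Sum.elim (fun n => Sigma.ι (fun _ : ℕ => M) n)
      (fun n => Sigma.ι (fun _ : ℕ => M) n - f n ≫ Sigma.ι (fun _ : ℕ => M) (n + 1))) with hα
  set β : (∐ fun _ : ℕ ⊕ ℕ => M) ⟶ (∐ fun _ : ℕ => M) :=
    Sigma.desc (Sum.elim (fun n => Sigma.ι (fun _ : ℕ => M) n)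
      (fun _ => 0)) with hβ
  have hκ : ∀ y : ℕ ⊕ ℕ,
      s.pt.a (Sigma.ι (fun _ : ℕ ⊕ ℕ => M) y ≫ (α ≫ Jx M f s)) =
      s.pt.a (Sigma.ι (fun _ : ℕ ⊕ ℕ => M) y ≫ (β ≫ Jx M f s)) := by
    rintro (n | n)
    · erw [← Category.assoc, ← Category.assoc]
      rw [show Sigma.ι (fun _ : ℕ ⊕ ℕ => M) (Sum.inl n) ≫ α =
          Sigma.ι (fun _ : ℕ => M) n from by rw [hα]; simp]
      rw [show Sigma.ι (fun _ : ℕ ⊕ ℕ => M) (Sum.inl n) ≫ β =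
          Sigma.ι (fun _ : ℕ => M) n from by rw [hβ]; simp]
    · erw [← Category.assoc, ← Category.assoc]
      rw [show Sigma.ι (fun _ : ℕ ⊕ ℕ => M) (Sum.inr n) ≫ α =
          Sigma.ι (fun _ : ℕ => M) n - f n ≫ Sigma.ι (fun _ : ℕ => M) (n + 1) from by
            rw [hα]; simp]
      rw [show Sigma.ι (fun _ : ℕ ⊕ ℕ => M) (Sum.inr n) ≫ β = 0 from by rw [hβ]; simp]
      have := tau_relation M f s n
      rw [tauFun, tauFun] at this
      exact this
  have hAE1 := algebra_eval_eq M s.pt (α ≫ Jx M f s)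
    (g ≫ ixl + e ≫ ixr)
  have hAE2 := algebra_eval_eq M s.pt (β ≫ Jx M f s)
    (g ≫ ixl + e ≫ ixr)
  have hdesc : (Sigma.desc (fun y => Sigma.ι (fun _ : s.pt.A => M)
        (s.pt.a (Sigma.ι (fun _ : ℕ ⊕ ℕ => M) y ≫ (α ≫ Jx M f s))))) =
      (Sigma.desc (fun y => Sigma.ι (fun _ : s.pt.A => M)
        (s.pt.a (Sigma.ι (fun _ : ℕ ⊕ ℕ => M) y ≫ (β ≫ Jx M f s))))) := by
    congr 1
    funext y
    rw [hκ y]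
  have hmain : s.pt.a ((g ≫ ixl + e ≫ ixr) ≫ (α ≫ Jx M f s)) =
      s.pt.a ((g ≫ ixl + e ≫ ixr) ≫ (β ≫ Jx M f s)) :=
    hAE1.trans ((congrArg (fun m => s.pt.a ((g ≫ ixl + e ≫ ixr) ≫ m)) hdesc).trans hAE2.symm)
  have hlα : ixl ≫ α = 𝟙 _ := by
    rw [hixl, hα]; ext n; simp
  have hrα : ixr ≫ α = telescopeMap M f := by
    rw [hixr, hα]; ext n; simp [telescopeMap]
  have hlβ : ixl ≫ β = 𝟙 _ := by
    rw [hixl, hβ]; ext n; simp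
  have hrβ : ixr ≫ β = 0 := by
    rw [hixr, hβ]; ext n; simp
  have hGα : (g ≫ ixl + e ≫ ixr) ≫ α = g + e ≫ telescopeMap M f := by
    rw [Preadditive.add_comp, Category.assoc, Category.assoc, hlα, hrα, Category.comp_id]
  have hGβ : (g ≫ ixl + e ≫ ixr) ≫ β = g := by
    rw [Preadditive.add_comp, Category.assoc, Category.assoc, hlβ, hrβ, Category.comp_id,
      Limits.comp_zero, add_zero]
  erw [← Category.assoc, ← Category.assoc, hGα, hGβ] at hmain
  exact hmain

lemma tau_welldef (hM : THEC M) (c : Cocone (seqDiagram M f)) (hc : IsColimit c)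
    (s : Cocone (seqDiagram M f ⋙ PsiM M)) (g g' : M ⟶ ∐ fun _ : ℕ => M)
    (hg : g ≫ telescopeProj M f c = g' ≫ telescopeProj M f c) :
    tauFun M f s g = tauFun M f s g' := by
  obtain ⟨e, he⟩ := (hM f c hc).2 (g - g')
    (by rw [Preadditive.sub_comp, hg, sub_self])
  have hsum : g' + e ≫ telescopeMap M f = g := by
    rw [he]; abel
  rw [← hsum, tau_invariant]

end TauInvariance


section DescConstruction

variable (M : A) (hM : THEC M) (f : ℕ → (M ⟶ M)) (c : Cocone (seqDiagram M f))
  (hc : IsColimit c)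

noncomputable def liftMap (h : M ⟶ c.pt) : M ⟶ ∐ fun _ : ℕ => M :=
  ((hM f c hc).1 h).choose

lemma liftMap_spec (h : M ⟶ c.pt) :
    liftMap M hM f c hc h ≫ telescopeProj M f c = h :=
  ((hM f c hc).1 h).choose_spec

variable (s : Cocone (seqDiagram M f ⋙ PsiM M))

noncomputable def descFun : (M ⟶ c.pt) → s.pt.A :=
  fun h => tauFun M f s (liftMap M hM f c hc h)

lemma descFun_eq (g : M ⟶ ∐ fun _ : ℕ => M) (h : M ⟶ c.pt)
    (hg : g ≫ telescopeProj M f c = h) :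
    descFun M hM f c hc s h = tauFun M f s g :=
  tau_welldef M f hM c hc s _ g ((liftMap_spec M hM f c hc h).trans hg.symm)

lemma descFun_fac (n : ℕ) (h : M ⟶ M) :
    descFun M hM f c hc s (h ≫ c.ι.app n) = (sIota M f s n).f h := by
  rw [descFun_eq M hM f c hc s (h ≫ Sigma.ι (fun _ : ℕ => M) n) _
    (by rw [Category.assoc, ι_telescopeProj])]
  rw [psi_hom_eval M (sIota M f s n) h]
  erw [tauFun, Category.assoc]
  erw [show Sigma.ι (fun _ : ℕ => M) n ≫ Jx M f s =
      Sigma.ι (fun _ : s.pt.A => M) (xElt M f s n) from Sigma.ι_desc _ _]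
  rw [xElt_def]

noncomputable def descHom : (PsiM M).obj c.pt ⟶ s.pt where
  f := TypeCat.ofHom (descFun M hM f c hc s)
  h := by
    refine ConcreteCategory.hom_ext _ _ (fun t => ?_)
    show s.pt.a ((TM M).map (TypeCat.ofHom (descFun M hM f c hc s)) t) =
      descFun M hM f c hc s (((PsiM M).obj c.pt).a t)
    set K' : (∐ fun _ : (M ⟶ c.pt) => M) ⟶
        (∐ fun _ : (M ⟶ (∐ fun _ : s.pt.A => M)) => M) :=
      Sigma.desc (fun h : M ⟶ c.pt => Sigma.ι (fun _ : (M ⟶ (∐ fun _ : s.pt.A => M)) => M)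
        (liftMap M hM f c hc h ≫ Jx M f s)) with hK'
    have hι : ∀ h : M ⟶ c.pt, Sigma.ι (fun _ : (M ⟶ c.pt) => M) h ≫ K' =
        Sigma.ι (fun _ : (M ⟶ (∐ fun _ : s.pt.A => M)) => M)
          (liftMap M hM f c hc h ≫ Jx M f s) := by
      intro h; rw [hK']; simp
    have hd1 : K' ≫ Sigma.desc (fun w : M ⟶ (∐ fun _ : s.pt.A => M) =>
        Sigma.ι (fun _ : s.pt.A => M) (s.pt.a w)) =
        Sigma.desc (fun h : M ⟶ c.pt =>
          Sigma.ι (fun _ : s.pt.A => M) (descFun M hM f c hc s h)) := by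
      apply Sigma.hom_ext
      intro h
      rw [← Category.assoc, hι h, Sigma.ι_desc, Sigma.ι_desc]
      rfl
    have hd2 : K' ≫ Sigma.desc (fun w : M ⟶ (∐ fun _ : s.pt.A => M) => w) =
        Sigma.desc (fun h : M ⟶ c.pt => liftMap M hM f c hc h) ≫ Jx M f s := by
      apply Sigma.hom_ext
      intro h
      rw [← Category.assoc, hι h, Sigma.ι_desc, ← Category.assoc, Sigma.ι_desc]
    have e1 : s.pt.a ((TM M).map (TypeCat.ofHom (descFun M hM f c hc s)) t) =
        s.pt.a ((t ≫ K') ≫ Sigma.desc (fun w : M ⟶ (∐ fun _ : s.pt.A => M) =>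
          Sigma.ι (fun _ : s.pt.A => M) (s.pt.a w))) := by
      apply congrArg s.pt.a
      have := congrArg (fun m => t ≫ m) hd1
      erw [← Category.assoc] at this
      exact this.symm
    have e2 := map_desc_apply M s.pt (t ≫ K')
    have e3 : s.pt.a ((t ≫ K') ≫ Sigma.desc (fun w : M ⟶ (∐ fun _ : s.pt.A => M) => w)) =
        s.pt.a ((t ≫ Sigma.desc (fun h : M ⟶ c.pt => liftMap M hM f c hc h)) ≫ Jx M f s) := by
      apply congrArg s.pt.a
      have := congrArg (fun m => t ≫ m) hd2
      erw [← Category.assoc, ← Category.assoc] at this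
      exact this
    have e4 : s.pt.a ((t ≫ Sigma.desc (fun h : M ⟶ c.pt => liftMap M hM f c hc h)) ≫ Jx M f s)
        = descFun M hM f c hc s (((PsiM M).obj c.pt).a t) := by
      have e5 : tauFun M f s (t ≫ Sigma.desc (fun h : M ⟶ c.pt => liftMap M hM f c hc h)) =
          tauFun M f s (liftMap M hM f c hc (((PsiM M).obj c.pt).a t)) := by
        apply tau_welldef M f hM c hc s
        erw [liftMap_spec, psi_a_apply, copowerAdj_counit_app, Category.assoc]
        congr 1
        apply Sigma.hom_ext
        intro h
        erw [← Category.assoc, Sigma.ι_desc, Sigma.ι_desc, liftMap_spec]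
      exact e5
    exact ((e1.trans e2).trans e3).trans e4

lemma descHom_fac (n : ℕ) :
    (PsiM M).map (c.ι.app n) ≫ descHom M hM f c hc s = sIota M f s n := by
  ext1
  refine ConcreteCategory.hom_ext _ _ (fun h => ?_)
  show descFun M hM f c hc s (((PsiM M).map (c.ι.app n)).f h) = (sIota M f s n).f h
  erw [psi_map_apply]
  exact descFun_fac M hM f c hc s n h

lemma descHom_uniq (m : (PsiM M).obj c.pt ⟶ s.pt)
    (hm : ∀ n, (PsiM M).map (c.ι.app n) ≫ m = sIota M f s n) :
    m = descHom M hM f c hc s := by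
  have hx : ∀ n, m.f (c.ι.app n) = xElt M f s n := by
    intro n
    have h := types_congr_hom (congrArg Monad.Algebra.Hom.f (hm n)) (𝟙 M)
    rw [Monad.Algebra.comp_f] at h
    rw [show (((PsiM M).map (c.ι.app n)).f ≫ m.f) (𝟙 M) =
        m.f (((PsiM M).map (c.ι.app n)).f (𝟙 M)) from rfl] at h
    erw [psi_map_apply, Category.id_comp] at h
    rw [h, xElt_def]
    rfl
  ext1
  refine ConcreteCategory.hom_ext _ _ (fun h => ?_)
  set g := liftMap M hM f c hc h with hgdef
  have hg : g ≫ telescopeProj M f c = h := liftMap_spec M hM f c hc h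
  set W0 : (∐ fun _ : ℕ => M) ⟶ (∐ fun _ : (M ⟶ c.pt) => M) :=
    Sigma.desc (fun n => Sigma.ι (fun _ : (M ⟶ c.pt) => M) (c.ι.app n)) with hW0
  have ht : ((PsiM M).obj c.pt).a (g ≫ W0) = h := by
    erw [psi_a_apply, copowerAdj_counit_app, ← hg, Category.assoc]
    congr 1
    ext n
    erw [← Category.assoc]
    erw [show Sigma.ι (fun _ : ℕ => M) n ≫ W0 =
        Sigma.ι (fun _ : (M ⟶ c.pt) => M) (c.ι.app n) from by rw [hW0]; simp]
    erw [Sigma.ι_desc, ι_telescopeProj]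
  have h1 := hom_h_apply M m (g ≫ W0)
  rw [ht] at h1
  have h2 : (TM M).map m.f (g ≫ W0) = g ≫ Jx M f s := by
    rw [show (TM M).map m.f (g ≫ W0) = (g ≫ W0) ≫
        Sigma.desc (fun t : M ⟶ c.pt => Sigma.ι (fun _ : s.pt.A => M) (m.f t)) from rfl]
    rw [Category.assoc]
    congr 1
    ext n
    rw [← Category.assoc]
    rw [show Sigma.ι (fun _ : ℕ => M) n ≫ W0 =
        Sigma.ι (fun _ : (M ⟶ c.pt) => M) (c.ι.app n) from by rw [hW0]; simp]
    erw [Sigma.ι_desc, hx n]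
    exact (Sigma.ι_desc (fun k => Sigma.ι (fun _ : s.pt.A => M) (xElt M f s k)) n).symm
  rw [h2] at h1
  -- h1 : s.pt.a (g ≫ Jx) = m.f h
  show m.f h = descFun M hM f c hc s h
  rw [← h1]
  rw [show descFun M hM f c hc s h = tauFun M f s g from rfl]
  rfl

include hM hc in
lemma psi_preserves : Nonempty (IsColimit ((PsiM M).mapCocone c)) := by
  constructor
  refine { desc := fun s => descHom M hM f c hc s, fac := ?_, uniq := ?_ }
  · intro s n
    exact descHom_fac M hM f c hc s n
  · intro s m hm
    exact descHom_uniq M hM f c hc s m (fun n => hm n)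

end DescConstruction


section CounitIso

variable (M : A)

lemma counit_iso_of_colimit (hM : THEC M) (f : ℕ → (M ⟶ M)) (c : Cocone (seqDiagram M f))
    (hc : IsColimit c) : IsIso ((adjM M).counit.app c.pt) := by
  obtain ⟨h3⟩ := psi_preserves M hM f c hc
  haveI : PreservesColimitsOfSize.{0, 0} (PhiM M) :=
    (adjM M).leftAdjoint_preservesColimits
  have hE : IsColimit ((PhiM M).mapCocone ((PsiM M).mapCocone c)) :=
    isColimitOfPreserves (PhiM M) h3
  haveI hbase : ∀ n : ℕ, IsIso ((adjM M).counit.app ((seqDiagram M f).obj n)) :=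
    fun _ => isIso_adjM_counit_M M
  let w : (seqDiagram M f ⋙ PsiM M) ⋙ PhiM M ≅ seqDiagram M f :=
    NatIso.ofComponents
      (fun n => @asIso _ _ _ _ _ (hbase n))
      (fun {n m} φ => by
        have := (adjM M).counit.naturality ((seqDiagram M f).map φ)
        simpa using this)
  have heq : (adjM M).counit.app c.pt = (IsColimit.coconePointsIsoOfNatIso hE hc w).hom := by
    apply hE.hom_ext
    intro n
    rw [IsColimit.comp_coconePointsIsoOfNatIso_hom]
    have hnat := (adjM M).counit.naturality (c.ι.app n)
    simp [w]
    rfl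
  rw [heq]
  infer_instance

end CounitIso


section UnitIso

variable (M : A)

noncomputable def copowerPUnitIso : (∐ fun _ : PUnit.{v + 1} => M) ≅ M where
  hom := Sigma.desc (fun _ => 𝟙 M)
  inv := Sigma.ι (fun _ : PUnit.{v + 1} => M) PUnit.unit
  hom_inv_id := by
    ext ⟨⟩
    simp
  inv_hom_id := by simp

noncomputable def pgenIso : PGen M ≅ (PsiM M).obj M :=
  (PsiM M).mapIso (copowerPUnitIso M)

lemma unit_iso_of_colimit (hM : THEC M) (g : ℕ → (PGen M ⟶ PGen M))
    (c : Cocone (seqDiagram (PGen M) g)) (hc : IsColimit c) :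
    IsIso ((adjM M).unit.app c.pt) := by
  -- choose f with Ψ f n corresponding to g n
  have hsurj : ∀ n : ℕ, ∃ q : M ⟶ M,
      (PsiM M).map q = (pgenIso M).inv ≫ g n ≫ (pgenIso M).hom :=
    fun n => (psiM_map_bijective M M).2 ((pgenIso M).inv ≫ g n ≫ (pgenIso M).hom)
  choose f hf using hsurj
  -- natural isomorphism between the two diagrams
  have hnat : ∀ n : ℕ, (seqDiagram (PGen M) g).map (homOfLE (Nat.le_add_right n 1)) ≫
      (pgenIso M).hom = (pgenIso M).hom ≫
        (seqDiagram M f ⋙ PsiM M).map (homOfLE (Nat.le_add_right n 1)) := by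
    intro n
    have h1 : (seqDiagram (PGen M) g).map (homOfLE (Nat.le_add_right n 1)) = g n := by
      simp [seqDiagram]
      rfl
    have h2 : (seqDiagram M f ⋙ PsiM M).map (homOfLE (Nat.le_add_right n 1)) =
        (PsiM M).map (f n) := by
      simp [seqDiagram]
      rfl
    rw [h1, h2, hf n]
    simp
    rfl
  let ν : seqDiagram (PGen M) g ⟶ seqDiagram M f ⋙ PsiM M :=
    NatTrans.ofSequence (F := seqDiagram (PGen M) g) (G := seqDiagram M f ⋙ PsiM M)
      (fun n => (pgenIso M).hom) hnat
  haveI : ∀ n : ℕ, IsIso (ν.app n) := fun n => by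
    rw [show ν.app n = (pgenIso M).hom from rfl]
    exact Iso.isIso_hom _
  haveI : IsIso ν := NatIso.isIso_of_isIso_app ν
  let νiso : seqDiagram (PGen M) g ≅ seqDiagram M f ⋙ PsiM M := asIso ν
  -- colimit of seqDiagram M f in A
  let cA := getColimitCocone (seqDiagram M f)
  obtain ⟨hΨ⟩ := psi_preserves M hM f cA.cocone cA.isColimit
  have hc' : IsColimit ((Cocone.precompose νiso.hom).obj ((PsiM M).mapCocone cA.cocone)) :=
    (IsColimit.precomposeHomEquiv νiso ((PsiM M).mapCocone cA.cocone)).symm hΨ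
  -- compare the two colimits
  let i : c.pt ≅ (PsiM M).obj cA.cocone.pt := hc.coconePointUniqueUpToIso hc'
  -- the unit is an isomorphism at Ψ of the colimit point
  have hε : IsIso ((adjM M).counit.app cA.cocone.pt) :=
    counit_iso_of_colimit M hM f cA.cocone cA.isColimit
  have htri := (adjM M).right_triangle_components cA.cocone.pt
  haveI : IsIso ((PsiM M).map ((adjM M).counit.app cA.cocone.pt)) := by
    haveI := hε; infer_instance
  haveI hunit : IsIso ((adjM M).unit.app ((PsiM M).obj cA.cocone.pt)) := by
    haveI : IsIso ((adjM M).unit.app ((PsiM M).obj cA.cocone.pt) ≫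
        (PsiM M).map ((adjM M).counit.app cA.cocone.pt)) := by
      rw [htri]; exact IsIso.id _
    exact IsIso.of_isIso_comp_right _ ((PsiM M).map ((adjM M).counit.app cA.cocone.pt))
  -- transport along the isomorphism i
  have hnat2 := (adjM M).unit.naturality i.hom
  haveI : IsIso ((adjM M).unit.app c.pt ≫ (PhiM M ⋙ PsiM M).map i.hom) := by
    rw [← hnat2]
    haveI : IsIso ((Functor.id _).map i.hom) := by
      simp only [Functor.id_map]; infer_instance
    exact inferInstance
  exact IsIso.of_isIso_comp_right _ ((PhiM M ⋙ PsiM M).map i.hom)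

end UnitIso


/-- Let `A` be a cocomplete additive category and `M ∈ A` an object
satisfying THEC. Let `B = T_M-Mod`, `G ⊆ A` the objects where the adjunction counit
`Φ_M(Ψ_M(G)) → G` is an isomorphism, and `H ⊆ B` the objects where the adjunction unit
`H → Ψ_M(Φ_M(H))` is an isomorphism. Then every countable direct limit of copies of `M`
belongs to `G`, every countable direct limit of copies of `P = T_M(*)` belongs to `H`,
and `Ψ_M` preserves countable direct limits of copies of `M`. -/
theorem thec_countable_direct_limits (M : A) (hM : THEC M) :
    (∀ (f : ℕ → (M ⟶ M)) (c : Cocone (seqDiagram M f)), IsColimit c →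
        IsIso ((adjM M).counit.app c.pt)) ∧
    (∀ (g : ℕ → (PGen M ⟶ PGen M)) (c : Cocone (seqDiagram (PGen M) g)), IsColimit c →
        IsIso ((adjM M).unit.app c.pt)) ∧
    (∀ (f : ℕ → (M ⟶ M)) (c : Cocone (seqDiagram M f)), IsColimit c →
        Nonempty (IsColimit ((PsiM M).mapCocone c))) :=
  ⟨fun f c hc => counit_iso_of_colimit M hM f c hc,
   fun g c hc => unit_iso_of_colimit M hM g c hc,
   fun f c hc => psi_preserves M hM f c hc⟩

end Stmt5

end EnochsPaper
end

section
/- In any cocomplete abelian category A, the class of functor pure monomorphisms is closed under pushouts and compositions, and the class of functor pure epimorphisms is closed under pullbacks and compositions. (Consequently, A with the class of functor pure short exact sequences is a Quillen exact category.) -/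
open CategoryTheory Limits Opposite

universe v u

namespace EnochsPaper

/-- The category `V` has exact direct limits: for every nonempty directed poset `Θ`, the
colimit functor `(Θ ⥤ V) ⥤ V` preserves finite limits. -/
def HasExactDirectLimits (V : Type u) [Category.{v} V] [HasColimits V] : Prop :=
  ∀ (Θ : Type v) (_ : PartialOrder Θ), IsDirected Θ (· ≤ ·) → Nonempty Θ →
    Nonempty (PreservesFiniteLimits (colim (J := Θ) (C := V)))

/-- A monomorphism `f` in a cocomplete abelian (or additive) category `A` is *functor
pure* if, for every cocomplete abelian category `V` with exact direct limits and every
additive functor `F : A ⥤ V` preserving all colimits, `F(f)` is a monomorphism. -/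
def IsFunctorPureMono {A : Type u} [Category.{v} A] [Preadditive A] {K M : A}
    (f : K ⟶ M) : Prop :=
  Mono f ∧
    ∀ (V : Type u) [Category.{v} V] [Abelian V] [HasColimits V],
      HasExactDirectLimits V →
        ∀ (F : A ⥤ V) (_ : F.Additive) (_ : PreservesColimitsOfSize.{v, v} F),
          Mono (F.map f)

/-- An epimorphism `g` in a cocomplete abelian category is a *functor pure epimorphism*
if the short exact sequence `0 → ker g → M → L → 0` is functor pure, i.e. the kernel
inclusion is a functor pure monomorphism. -/
noncomputable def IsFunctorPureEpi {A : Type u} [Category.{v} A] [Abelian A] {M L : A}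
    (g : M ⟶ L) : Prop :=
  Epi g ∧ IsFunctorPureMono (kernel.ι g)

/-- A short exact sequence is functor pure if its mono is functor pure. -/
def ShortComplexIsFunctorPure {A : Type u} [Category.{v} A] [Abelian A]
    (S : ShortComplex A) : Prop :=
  S.ShortExact ∧ IsFunctorPureMono S.f



namespace Stmt10

variable {A : Type u} [Category.{v} A] [Abelian A] [HasColimits A]

/-- The kernel of `pullback.snd g l` is isomorphic to the kernel of `g`, compatibly with
the inclusions. -/
lemma exists_iso_kernel_pullback_snd {M L L' : A} (g : M ⟶ L) (l : L' ⟶ L) :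
    ∃ e : kernel (pullback.snd g l) ⟶ kernel g, IsIso e ∧
      e ≫ kernel.ι g = kernel.ι (pullback.snd g l) ≫ pullback.fst g l := by
  have h₁ : (kernel.ι (pullback.snd g l) ≫ pullback.fst g l) ≫ g = 0 := by
    rw [Category.assoc, pullback.condition, ← Category.assoc, kernel.condition, zero_comp]
  refine ⟨kernel.lift g _ h₁, ?_, kernel.lift_ι _ _ _⟩
  have h₂ : pullback.lift (kernel.ι g) 0
      (by rw [kernel.condition, zero_comp]) ≫ pullback.snd g l = 0 :=
    pullback.lift_snd _ _ _
  refine ⟨kernel.lift (pullback.snd g l) _ h₂, ?_, ?_⟩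
  · rw [← cancel_mono (kernel.ι (pullback.snd g l))]
    apply pullback.hom_ext
    · simp [pullback.condition]
      erw [pullback.lift_fst]
      exact kernel.lift_ι _ _ _
    · simp
      erw [pullback.lift_snd, comp_zero]
  · rw [← cancel_mono (kernel.ι g)]
    simp
    exact pullback.lift_fst _ _ _

/-- The kernel inclusion of the pullback of a functor pure epimorphism is functor pure. -/
lemma isFunctorPureMono_kernel_pullback_snd {M L L' : A} (g : M ⟶ L)
    (hg : IsFunctorPureMono (kernel.ι g)) (l : L' ⟶ L) :
    IsFunctorPureMono (kernel.ι (pullback.snd g l)) := by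
  obtain ⟨e, he_iso, he⟩ := exists_iso_kernel_pullback_snd g l
  refine ⟨inferInstance, ?_⟩
  intro V _ _ _ hV F hFadd hFcol
  haveI := hFadd; haveI := hFcol
  haveI hm : Mono (F.map (kernel.ι g)) := hg.2 V hV F hFadd hFcol
  haveI : IsIso (F.map e) := inferInstance
  have : Mono (F.map (kernel.ι (pullback.snd g l)) ≫ F.map (pullback.fst g l)) := by
    rw [← F.map_comp, ← he, F.map_comp]
    exact mono_comp _ _
  exact mono_of_mono _ (F.map (pullback.fst g l))

/-- If `g` is an epimorphism whose kernel inclusion is sent to a monomorphism by `F`,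
then `F` of the kernel sequence of `g` remains a kernel sequence; in particular any map
killed by `F.map g` factors through `F.map (kernel.ι g)`. -/
lemma exists_lift_of_comp_map_eq_zero {V : Type u} [Category.{v} V] [Abelian V]
    [HasColimits V] {M L : A} (g : M ⟶ L) [Epi g]
    (F : A ⥤ V) [F.Additive] [PreservesColimitsOfSize.{v, v} F]
    (hm : Mono (F.map (kernel.ι g))) {T : V} (t : T ⟶ F.obj M)
    (ht : t ≫ F.map g = 0) : ∃ y : T ⟶ F.obj (kernel g), y ≫ F.map (kernel.ι g) = t := by
  have h1 : IsColimit (CokernelCofork.ofπ g (KernelFork.condition _)) :=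
    Abelian.epiIsCokernelOfKernel _ (kernelIsKernel g)
  have h2 := isColimitCoforkMapOfIsColimit' F _ h1
  haveI := hm
  have h2' : IsColimit (CokernelCofork.ofπ (F.map g)
      (show F.map (kernel.ι g) ≫ F.map g = 0 by
        rw [← F.map_comp, kernel.condition, F.map_zero])) := h2
  have h3 := Abelian.monoIsKernelOfCokernel _ h2'
  obtain ⟨y, hy⟩ := KernelFork.IsLimit.lift' h3 t ht
  exact ⟨y, hy⟩

/-- In any cocomplete abelian category, the class of functor pure
monomorphisms is closed under pushouts and compositions, and the class of functor pure
epimorphisms is closed under pullbacks and compositions. -/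
theorem functorPure_closure_properties :
    (∀ (K M K'' : A) (f : K ⟶ M), IsFunctorPureMono f →
      ∀ k : K ⟶ K'', IsFunctorPureMono (pushout.inr f k)) ∧
    (∀ (K M M' : A) (f : K ⟶ M) (f' : M ⟶ M'),
      IsFunctorPureMono f → IsFunctorPureMono f' → IsFunctorPureMono (f ≫ f')) ∧
    (∀ (M L L' : A) (g : M ⟶ L), IsFunctorPureEpi g →
      ∀ l : L' ⟶ L, IsFunctorPureEpi (pullback.snd g l)) ∧
    (∀ (M L L' : A) (g : M ⟶ L) (g' : L ⟶ L'),
      IsFunctorPureEpi g → IsFunctorPureEpi g' → IsFunctorPureEpi (g ≫ g')) := by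
  refine ⟨?_, ?_, ?_, ?_⟩
  · -- pushouts of functor pure monos
    intro K M K'' f hf k
    haveI : Mono f := hf.1
    refine ⟨inferInstance, ?_⟩
    intro V _ _ _ hV F hFadd hFcol
    haveI := hFadd; haveI := hFcol
    haveI hm : Mono (F.map f) := hf.2 V hV F hFadd hFcol
    rw [← PreservesPushout.inr_iso_hom F f k]
    exact mono_comp _ _
  · -- compositions of functor pure monos
    intro K M M' f f' hf hf'
    haveI : Mono f := hf.1
    haveI : Mono f' := hf'.1
    refine ⟨mono_comp _ _, ?_⟩
    intro V _ _ _ hV F hFadd hFcol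
    haveI hm : Mono (F.map f) := hf.2 V hV F hFadd hFcol
    haveI hm' : Mono (F.map f') := hf'.2 V hV F hFadd hFcol
    rw [F.map_comp]
    exact mono_comp _ _
  · -- pullbacks of functor pure epis
    intro M L L' g hg l
    haveI := hg.1
    exact ⟨inferInstance, isFunctorPureMono_kernel_pullback_snd g hg.2 l⟩
  · -- compositions of functor pure epis
    intro M L L' g g' hg hg'
    haveI := hg.1; haveI := hg'.1
    refine ⟨epi_comp _ _, inferInstance, ?_⟩
    intro V _ _ _ hV F hFadd hFcol
    haveI := hFadd; haveI := hFcol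
    -- notation
    have hp0 : (kernel.ι (g ≫ g') ≫ g) ≫ g' = 0 := by
      rw [Category.assoc]; exact kernel.condition _
    set p : kernel (g ≫ g') ⟶ kernel g' := kernel.lift g' (kernel.ι (g ≫ g') ≫ g) hp0
      with hp_def
    have hpι : p ≫ kernel.ι g' = kernel.ι (g ≫ g') ≫ g := kernel.lift_ι _ _ _
    set φ : kernel (g ≫ g') ⟶ pullback g (kernel.ι g') :=
      pullback.lift (kernel.ι (g ≫ g')) p hpι.symm with hφ_def
    have hψ0 : pullback.fst g (kernel.ι g') ≫ g ≫ g' = 0 := by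
      rw [← Category.assoc, pullback.condition, Category.assoc, kernel.condition, comp_zero]
    set ψ : pullback g (kernel.ι g') ⟶ kernel (g ≫ g') :=
      kernel.lift (g ≫ g') (pullback.fst g (kernel.ι g')) hψ0 with hψ_def
    have hφψ : φ ≫ ψ = 𝟙 _ := by
      rw [← cancel_mono (kernel.ι (g ≫ g'))]
      simp [hφ_def, hψ_def]
      exact pullback.lift_fst _ _ _
    -- purity data
    haveI hmg : Mono (F.map (kernel.ι g)) := hg.2.2 V hV F hFadd hFcol
    haveI hmg' : Mono (F.map (kernel.ι g')) := hg'.2.2 V hV F hFadd hFcol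
    have hqpure := isFunctorPureMono_kernel_pullback_snd g hg.2 (kernel.ι g')
    haveI hmκ : Mono (F.map (kernel.ι (pullback.snd g (kernel.ι g')))) :=
      hqpure.2 V hV F hFadd hFcol
    obtain ⟨e, he_iso, he⟩ := exists_iso_kernel_pullback_snd g (kernel.ι g')
    haveI := he_iso
    rw [Preadditive.mono_iff_cancel_zero]
    intro T t ht
    have h1 : t ≫ F.map p = 0 := by
      have h1' : (t ≫ F.map p) ≫ F.map (kernel.ι g') = 0 := by
        rw [Category.assoc, ← F.map_comp, hpι, F.map_comp, ← Category.assoc, ht, zero_comp]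
      exact zero_of_comp_mono _ h1'
    have h2 : (t ≫ F.map φ) ≫ F.map (pullback.snd g (kernel.ι g')) = 0 := by
      rw [Category.assoc, ← F.map_comp]
      have : φ ≫ pullback.snd g (kernel.ι g') = p := pullback.lift_snd _ _ _
      rw [this]; exact h1
    obtain ⟨y, hy⟩ := exists_lift_of_comp_map_eq_zero (pullback.snd g (kernel.ι g')) F
      hmκ (t ≫ F.map φ) h2
    have ht' : t = y ≫ F.map (kernel.ι (pullback.snd g (kernel.ι g'))) ≫ F.map ψ := by
      rw [← Category.assoc, hy, Category.assoc, ← F.map_comp, hφψ, F.map_id, Category.comp_id]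
    have hκψι : kernel.ι (pullback.snd g (kernel.ι g')) ≫ ψ ≫ kernel.ι (g ≫ g')
        = e ≫ kernel.ι g := by
      rw [he]
      congr 1
      exact kernel.lift_ι _ _ _
    have hy0 : (y ≫ F.map e) ≫ F.map (kernel.ι g) = 0 := by
      have e1 : (y ≫ F.map e) ≫ F.map (kernel.ι g) =
          ((y ≫ F.map (kernel.ι (pullback.snd g (kernel.ι g')))) ≫ F.map ψ) ≫
            F.map (kernel.ι (g ≫ g')) := by
        simp only [Category.assoc, ← F.map_comp]
        rw [hκψι]
      rw [e1, hy]
      slice_lhs 2 3 => rw [← F.map_comp, hφψ]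
      simpa using ht
    have hy1 : y ≫ F.map e = 0 := zero_of_comp_mono _ hy0
    have hy2 : y = 0 := by
      haveI : IsIso (F.map e) := inferInstance
      rw [← cancel_mono (F.map e), hy1, zero_comp]
    rw [ht', hy2, zero_comp]

end Stmt10

end EnochsPaper
end
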